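/- (Dimension 72 case of the main theorem.) Define P₇₂(z) = (1 − z)⁹ − (135/16)(1 − z)⁶ z² + (60345/4096)(1 − z)³ z⁴ − (53325/32768) z⁶. For every real y > 0, P₇₂(z(y)) ≥ P₇₂(1/4) > 0; consequently the secrecy function Ξ(y) = P₇₂(z(y))^{-1} of the extremal even unimodular lattice in dimension 72 satisfies Ξ(y) ≤ Ξ(1) = P₇₂(1/4)^{-1}. -/
import Mathlib

open Real


/-- Jacobi theta constant θ₂ on the imaginary axis. -/
noncomputable def theta2 (y : ℝ) : ℝ := ∑' n : ℤ, Real.exp (-Real.pi * y * (n + 1/2)^2)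

/-- Jacobi theta constant θ₃ on the imaginary axis. -/
noncomputable def theta3 (y : ℝ) : ℝ := ∑' n : ℤ, Real.exp (-Real.pi * y * n^2)

/-- Jacobi theta constant θ₄ on the imaginary axis. -/
noncomputable def theta4 (y : ℝ) : ℝ := ∑' n : ℤ, (-1 : ℝ)^n * Real.exp (-Real.pi * y * n^2)

/-- The function z(y) = θ₂(y)⁴θ₄(y)⁴/θ₃(y)⁸. -/
noncomputable def zfun (y : ℝ) : ℝ := theta2 y ^ 4 * theta4 y ^ 4 / theta3 y ^ 8

/-- Denominator polynomial of the secrecy function of the extremal even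
unimodular lattice in dimension 72. -/
noncomputable def P72 (z : ℝ) : ℝ := (1 - z) ^ 9 - 135 / 16 * (1 - z) ^ 6 * z ^ 2 + 60345 / 4096 * (1 - z) ^ 3 * z ^ 4 - 53325 / 32768 * z ^ 6

noncomputable def T (y a : ℝ) : ℝ := ∑' n : ℤ, Real.exp (-Real.pi * y * ((n : ℝ) + a) ^ 2)

lemma summable_gauss {y : ℝ} (hy : 0 < y) (a : ℝ) :
    Summable fun n : ℤ => Real.exp (-π * y * ((n : ℝ) + a) ^ 2) := by
  refine (HurwitzKernelBounds.summable_f_int 0 a hy).congr fun n => ?_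
  simp only [HurwitzKernelBounds.f_int, pow_zero, one_mul]
  congr 1
  ring

lemma summable_gauss_norm {y : ℝ} (hy : 0 < y) (a : ℝ) :
    Summable fun n : ℤ => ‖Real.exp (-π * y * ((n : ℝ) + a) ^ 2)‖ :=
  (summable_gauss hy a).congr fun n => (Real.norm_of_nonneg (Real.exp_pos _).le).symm

lemma prod_eq {y : ℝ} (hy : 0 < y) (a b : ℝ) :
    T y a * T y b = ∑' p : ℤ × ℤ,
      Real.exp (-π * y * ((p.1 : ℝ) + a) ^ 2) * Real.exp (-π * y * ((p.2 : ℝ) + b) ^ 2) :=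
  tsum_mul_tsum_of_summable_norm (summable_gauss_norm hy a) (summable_gauss_norm hy b)

lemma tsum_split (g : ℤ × ℤ → ℝ) (hg : Summable g) :
    ∑' p, g p = (∑' p : ℤ × ℤ, g (p.1 + p.2, p.1 - p.2))
      + ∑' p : ℤ × ℤ, g (p.1 + p.2 + 1, p.1 - p.2) := by
  classical
  set e : ℤ × ℤ → ℤ × ℤ := fun p => (p.1 + p.2, p.1 - p.2) with he_def
  set o : ℤ × ℤ → ℤ × ℤ := fun p => (p.1 + p.2 + 1, p.1 - p.2) with ho_def
  have he : Function.Injective e := by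
    rintro ⟨a, b⟩ ⟨c, d⟩ h
    simp only [e, Prod.mk.injEq] at h ⊢
    omega
  have ho : Function.Injective o := by
    rintro ⟨a, b⟩ ⟨c, d⟩ h
    simp only [o, Prod.mk.injEq] at h ⊢
    omega
  have hcompl : (Set.range e)ᶜ = Set.range o := by
    ext ⟨m, n⟩
    simp only [Set.mem_compl_iff, Set.mem_range, Prod.mk.injEq, Prod.exists, not_exists, e, o]
    constructor
    · intro h
      refine ⟨(m + n - 1) / 2, (m - n - 1) / 2, ?_, ?_⟩ <;>
      · have := h ((m + n) / 2) ((m - n) / 2)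
        omega
    · rintro ⟨a, b, h1, h2⟩ c d ⟨h3, h4⟩
      omega
  have h1 : ∑' p : ℤ × ℤ, g (e p) = ∑' x : Set.range e, g x := by
    rw [← (Equiv.ofInjective e he).tsum_eq (fun x : Set.range e => g (x : ℤ × ℤ))]
    rfl
  have h2 : ∑' p : ℤ × ℤ, g (o p) = ∑' x : ↥(Set.range e)ᶜ, g x := by
    rw [hcompl, ← (Equiv.ofInjective o ho).tsum_eq (fun x : Set.range o => g (x : ℤ × ℤ))]
    rfl
  rw [← Summable.tsum_add_tsum_compl (s := Set.range e) (hg.subtype _) (hg.subtype _), ← h1, ← h2]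


lemma theta2_eq (y : ℝ) : theta2 y = T y (1/2) := rfl

lemma theta3_eq (y : ℝ) : theta3 y = T y 0 := by
  refine tsum_congr fun n => ?_
  rw [add_zero]

lemma T_one (y : ℝ) : T y 1 = T y 0 := by
  have h := (Equiv.addRight (1 : ℤ)).tsum_eq
    (fun n : ℤ => Real.exp (-π * y * ((n : ℝ) + 0) ^ 2))
  rw [T, T, ← h]
  refine tsum_congr fun n => ?_
  simp only [Equiv.coe_addRight]
  congr 1
  push_cast
  ring

lemma summable_mul_gauss {y : ℝ} (hy : 0 < y) (a b : ℝ) :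
    Summable fun p : ℤ × ℤ =>
      Real.exp (-π * y * ((p.1 : ℝ) + a) ^ 2) * Real.exp (-π * y * ((p.2 : ℝ) + b) ^ 2) :=
  (summable_gauss hy a).mul_of_nonneg (summable_gauss hy b)
    (fun _ => (Real.exp_pos _).le) (fun _ => (Real.exp_pos _).le)

lemma idA {y : ℝ} (hy : 0 < y) :
    theta3 y ^ 2 = theta3 (2*y) ^ 2 + theta2 (2*y) ^ 2 := by
  have h2y : (0:ℝ) < 2*y := by linarith
  rw [theta3_eq, theta2_eq, theta3_eq, pow_two, pow_two, pow_two, prod_eq hy 0 0,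
    tsum_split _ (summable_mul_gauss hy 0 0), prod_eq h2y 0 0, prod_eq h2y (1/2) (1/2)]
  congr 1
  · refine tsum_congr fun p => ?_
    rw [← Real.exp_add, ← Real.exp_add]
    congr 1
    push_cast
    ring
  · refine tsum_congr fun p => ?_
    rw [← Real.exp_add, ← Real.exp_add]
    congr 1
    push_cast
    ring

lemma idC {y : ℝ} (hy : 0 < y) :
    theta2 y ^ 2 = 2 * (theta2 (2*y) * theta3 (2*y)) := by
  have h2y : (0:ℝ) < 2*y := by linarith
  rw [theta2_eq, theta2_eq, theta3_eq, pow_two, prod_eq hy (1/2) (1/2),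
    tsum_split _ (summable_mul_gauss hy (1/2) (1/2)), two_mul]
  congr 1
  · rw [prod_eq h2y (1/2) 0]
    refine tsum_congr fun p => ?_
    rw [← Real.exp_add, ← Real.exp_add]
    congr 1
    push_cast
    ring
  · rw [show T (2*y) (1/2) * T (2*y) 0 = T (2*y) 1 * T (2*y) (1/2) by
      rw [T_one]; ring, prod_eq h2y 1 (1/2)]
    refine tsum_congr fun p => ?_
    rw [← Real.exp_add, ← Real.exp_add]
    congr 1
    push_cast
    ring

lemma theta4_eq (y : ℝ) :
    theta4 y = ∑' n : ℤ, (-1 : ℝ)^n * Real.exp (-π * y * ((n : ℝ) + 0) ^ 2) := by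
  refine tsum_congr fun n => ?_
  rw [add_zero]

lemma summable_theta4 {y : ℝ} (hy : 0 < y) :
    Summable fun n : ℤ => (-1 : ℝ)^n * Real.exp (-π * y * ((n : ℝ) + 0) ^ 2) := by
  refine Summable.of_norm ?_
  refine (summable_gauss hy 0).congr fun n => ?_
  rw [norm_mul, norm_zpow, norm_neg, norm_one, one_zpow, one_mul,
    Real.norm_of_nonneg (Real.exp_pos _).le]

lemma summable_theta4_norm {y : ℝ} (hy : 0 < y) :
    Summable fun n : ℤ => ‖(-1 : ℝ)^n * Real.exp (-π * y * ((n : ℝ) + 0) ^ 2)‖ := by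
  refine (summable_gauss hy 0).congr fun n => ?_
  rw [norm_mul, norm_zpow, norm_neg, norm_one, one_zpow, one_mul,
    Real.norm_of_nonneg (Real.exp_pos _).le]

lemma idB {y : ℝ} (hy : 0 < y) :
    theta4 y ^ 2 = theta3 (2*y) ^ 2 - theta2 (2*y) ^ 2 := by
  have h2y : (0:ℝ) < 2*y := by linarith
  have hne : (-1 : ℝ) ≠ 0 := by norm_num
  rw [theta4_eq, theta3_eq, theta2_eq, pow_two, pow_two, pow_two,
    tsum_mul_tsum_of_summable_norm (summable_theta4_norm hy) (summable_theta4_norm hy),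
    tsum_split _ (summable_mul_of_summable_norm (summable_theta4_norm hy) (summable_theta4_norm hy)), sub_eq_add_neg]
  congr 1
  · rw [prod_eq h2y 0 0]
    refine tsum_congr fun p => ?_
    have hsgn : (-1 : ℝ)^(p.1 + p.2) * (-1 : ℝ)^(p.1 - p.2) = 1 := by
      rw [← zpow_add₀ hne, show p.1 + p.2 + (p.1 - p.2) = 2 * p.1 by ring, zpow_mul]
      norm_num
    rw [show ((-1 : ℝ)^(p.1 + p.2) * Real.exp (-π * y * ((↑(p.1 + p.2) : ℝ) + 0) ^ 2)) *
        ((-1 : ℝ)^(p.1 - p.2) * Real.exp (-π * y * ((↑(p.1 - p.2) : ℝ) + 0) ^ 2))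
        = ((-1 : ℝ)^(p.1 + p.2) * (-1 : ℝ)^(p.1 - p.2)) *
          (Real.exp (-π * y * ((↑(p.1 + p.2) : ℝ) + 0) ^ 2) *
           Real.exp (-π * y * ((↑(p.1 - p.2) : ℝ) + 0) ^ 2)) by ring, hsgn, one_mul,
      ← Real.exp_add, ← Real.exp_add]
    congr 1
    push_cast
    ring
  · rw [prod_eq h2y (1/2) (1/2), ← tsum_neg]
    refine tsum_congr fun p => ?_
    have hsgn : (-1 : ℝ)^(p.1 + p.2 + 1) * (-1 : ℝ)^(p.1 - p.2) = -1 := by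
      rw [← zpow_add₀ hne, show p.1 + p.2 + 1 + (p.1 - p.2) = 2 * p.1 + 1 by ring,
        zpow_add₀ hne, zpow_mul]
      norm_num
    rw [show ((-1 : ℝ)^(p.1 + p.2 + 1) * Real.exp (-π * y * ((↑(p.1 + p.2 + 1) : ℝ) + 0) ^ 2)) *
        ((-1 : ℝ)^(p.1 - p.2) * Real.exp (-π * y * ((↑(p.1 - p.2) : ℝ) + 0) ^ 2))
        = ((-1 : ℝ)^(p.1 + p.2 + 1) * (-1 : ℝ)^(p.1 - p.2)) *
          (Real.exp (-π * y * ((↑(p.1 + p.2 + 1) : ℝ) + 0) ^ 2) *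
           Real.exp (-π * y * ((↑(p.1 - p.2) : ℝ) + 0) ^ 2)) by ring, hsgn,
      ← Real.exp_add, ← Real.exp_add, neg_mul, one_mul, neg_inj]
    congr 1
    push_cast
    ring

lemma jacobi {y : ℝ} (hy : 0 < y) :
    theta2 y ^ 4 + theta4 y ^ 4 = theta3 y ^ 4 := by
  rw [show theta2 y ^ 4 = (theta2 y ^ 2)^2 by ring,
    show theta4 y ^ 4 = (theta4 y ^ 2)^2 by ring,
    show theta3 y ^ 4 = (theta3 y ^ 2)^2 by ring, idA hy, idB hy, idC hy]
  ring


lemma theta4_one : theta4 1 = theta2 1 := by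
  have h := Complex.tsum_exp_neg_quadratic (a := 1) (by norm_num) (-Complex.I / 2)
  have hL : ∀ n : ℤ, Complex.exp (-(π:ℂ) * 1 * (n:ℂ) ^ 2 + 2 * (π:ℂ) * (-Complex.I / 2) * n)
      = (((-1 : ℝ)^n * Real.exp (-π * 1 * (n:ℝ)^2) : ℝ) : ℂ) := by
    intro n
    rw [Complex.exp_add]
    have h1 : (2 * (π:ℂ) * (-Complex.I / 2) * n) = (-n : ℤ) * ((π:ℂ) * Complex.I) := by
      push_cast
      ring
    rw [h1, Complex.exp_int_mul, Complex.exp_pi_mul_I]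
    push_cast
    rw [zpow_neg, show ((-1 : ℂ)^n)⁻¹ = ((-1 : ℂ)⁻¹)^n by rw [inv_zpow],
      show ((-1 : ℂ))⁻¹ = -1 by norm_num]
    push_cast [Complex.ofReal_exp]
    ring
  have hR : ∀ n : ℤ, Complex.exp (-(π:ℂ) / 1 * ((n:ℂ) + Complex.I * (-Complex.I / 2)) ^ 2)
      = ((Real.exp (-π * 1 * ((n:ℝ) + 1/2)^2) : ℝ) : ℂ) := by
    intro n
    rw [Complex.ofReal_exp]
    congr 1
    have : Complex.I * (-Complex.I / 2) = 1/2 := by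
      rw [show Complex.I * (-Complex.I / 2) = -(Complex.I * Complex.I) / 2 by ring,
        Complex.I_mul_I]
      norm_num
    rw [this]
    push_cast
    ring
  have key : ((theta4 1 : ℝ) : ℂ) = ((theta2 1 : ℝ) : ℂ) := by
    rw [theta4, theta2, Complex.ofReal_tsum, Complex.ofReal_tsum]
    calc ∑' n : ℤ, (((-1 : ℝ)^n * Real.exp (-π * 1 * (n:ℝ)^2) : ℝ) : ℂ)
        = ∑' n : ℤ, Complex.exp (-(π:ℂ) * 1 * (n:ℂ) ^ 2 + 2 * (π:ℂ) * (-Complex.I / 2) * n) := by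
          exact (tsum_congr hL).symm
      _ = 1 / (1:ℂ) ^ ((1:ℂ)/2) * ∑' n : ℤ,
            Complex.exp (-(π:ℂ) / 1 * ((n:ℂ) + Complex.I * (-Complex.I / 2)) ^ 2) := h
      _ = ∑' n : ℤ, ((Real.exp (-π * 1 * ((n:ℝ) + 1/2)^2) : ℝ) : ℂ) := by
          rw [Complex.one_cpow, tsum_congr hR]
          norm_num
  exact_mod_cast key

lemma theta2_pos {y : ℝ} (hy : 0 < y) : 0 < theta2 y := by
  rw [theta2_eq, T]
  exact Summable.tsum_pos (summable_gauss hy (1/2)) (fun n => (Real.exp_pos _).le) 0 (Real.exp_pos _)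

lemma theta3_pos {y : ℝ} (hy : 0 < y) : 0 < theta3 y := by
  rw [theta3_eq, T]
  exact Summable.tsum_pos (summable_gauss hy 0) (fun n => (Real.exp_pos _).le) 0 (Real.exp_pos _)

lemma zfun_nonneg (y : ℝ) : 0 ≤ zfun y := by
  rw [zfun]
  positivity

lemma zfun_le {y : ℝ} (hy : 0 < y) : zfun y ≤ 1/4 := by
  have h3 := theta3_pos hy
  have hj := jacobi hy
  rw [zfun, div_le_iff₀ (by positivity)]
  have h8 : theta3 y ^ 8 = (theta2 y ^ 4 + theta4 y ^ 4)^2 := by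
    rw [hj]; ring
  nlinarith [sq_nonneg (theta2 y ^ 4 - theta4 y ^ 4)]

lemma zfun_one : zfun 1 = 1/4 := by
  have h2 := theta2_pos one_pos
  have hj := jacobi one_pos
  rw [theta4_one] at hj
  have h34 : theta3 1 ^ 4 = 2 * theta2 1 ^ 4 := by linarith
  rw [zfun, theta4_one, show theta3 1 ^ 8 = (theta3 1 ^ 4)^2 by ring, h34,
    div_eq_iff (by positivity)]
  ring


lemma P72_key {z : ℝ} (h0 : 0 ≤ z) (h1 : z ≤ 1/4) : P72 (1/4) ≤ P72 z := by
  unfold P72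
  nlinarith [sq_nonneg z, sq_nonneg (1/4 - z), mul_nonneg h0 h0,
    mul_nonneg (mul_nonneg h0 h0) h0, sq_nonneg (z*(1/4-z)),
    mul_nonneg (sub_nonneg.2 h1) h0, pow_nonneg h0 4, pow_nonneg h0 5,
    pow_nonneg h0 6, pow_nonneg h0 7, pow_nonneg h0 8,
    mul_nonneg (pow_nonneg h0 4) (sub_nonneg.2 h1),
    mul_nonneg (pow_nonneg h0 5) (sub_nonneg.2 h1),
    mul_nonneg (pow_nonneg h0 6) (sub_nonneg.2 h1),
    mul_nonneg (pow_nonneg h0 7) (sub_nonneg.2 h1)]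

theorem secrecy_dim72 :
    (∀ y : ℝ, 0 < y → P72 (1 / 4) ≤ P72 (zfun y)) ∧ 0 < P72 (1 / 4) ∧
      (∀ y : ℝ, 0 < y → (P72 (zfun y))⁻¹ ≤ (P72 (zfun 1))⁻¹) ∧
      (P72 (zfun 1))⁻¹ = (P72 (1 / 4))⁻¹ := by
  have key : ∀ y : ℝ, 0 < y → P72 (1 / 4) ≤ P72 (zfun y) := fun y hy =>
    P72_key (zfun_nonneg y) (zfun_le hy)
  have hpos : 0 < P72 (1 / 4) := by unfold P72; norm_num
  refine ⟨key, hpos, fun y hy => ?_, by rw [zfun_one]⟩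
  rw [zfun_one]
  exact inv_anti₀ hpos (key y hy)
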